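/- Let m be even, let P be a regular T-anti-palindromic matrix polynomial of degree m with n×n coefficients, let λ ∈ ℂ with λ ≠ 1 and λ ≠ −1, and let x ∈ ℂⁿ with ‖x‖₂ = 1; set r := −P(λ)x. Then the Frobenius-norm structured backward error over the class S_ap of T-anti-palindromic polynomials of degree m satisfies η_F^{S_ap}(λ, x, P) = [ (2/‖Λ_m‖₂²)·‖r‖₂² + ( 1/‖Π₋(Λ_m)‖₂² − 2/‖Λ_m‖₂² )·|xᵀr|² ]^{1/2}. -/

import Mathlib

/-!
Write `y j = Δ j *ᵥ x`, `s j = xᵀ y j` and `x̄ = star x`; anti-palindromy forces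
`s (m - j) = -s j`. Splitting the rows of `Δ j` along `x̄` gives
`‖Δ j‖_F² ≥ ‖y j‖² + ‖y (m - j)‖² - |s j|²`, with equality for the anti-palindromic rank-two
family `Δ j = (y j - s j x̄) x̄ᵀ - x̄ (y (m - j))ᵀ`. So the backward error is the minimum of
`∑ |s j|² + 2 ∑ ‖y j - s j x̄‖²` subject to `∑ λ^j y j = r`, and the two parts decouple:
`2 xᵀr = ∑ (λ^j - λ^(m-j)) s j` and `∑ λ^j (y j - s j x̄) = r - (xᵀr) x̄`. Cauchy–Schwarz
bounds them below by `|xᵀr|² / ‖Π₋(Λ_m)‖²` and `2 (‖r‖² - |xᵀr|²) / ‖Λ_m‖²`, and both bounds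
are attained at once.
-/

noncomputable section

/-- Euclidean (ℓ²) norm of a complex vector. -/
def vnorm {α : Type*} [Fintype α] (x : α → ℂ) : ℝ :=
  Real.sqrt (∑ i, ‖x i‖ ^ 2)

/-- Frobenius norm of a complex matrix. -/
def frobNorm {α : Type*} [Fintype α] (A : Matrix α α ℂ) : ℝ :=
  Real.sqrt (∑ i, ∑ j, ‖A i j‖ ^ 2)

/-- Spectral (operator 2-)norm of a complex matrix. -/
def specNorm {α : Type*} [Fintype α] [DecidableEq α] (A : Matrix α α ℂ) : ℝ :=
  ‖Matrix.toEuclideanCLM (𝕜 := ℂ) A‖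

/-- Evaluation of the matrix polynomial `P(z) = ∑_{j=0}^m z^j A_j`. -/
def evalP {n : ℕ} (m : ℕ) (A : ℕ → Matrix (Fin n) (Fin n) ℂ) (z : ℂ) :
    Matrix (Fin n) (Fin n) ℂ :=
  ∑ j ∈ Finset.range (m + 1), z ^ j • A j

/-- `‖Λ_m‖₂² = ∑_{j=0}^m |λ|^{2j}` where `Λ_m = (1, λ, …, λ^m)ᵀ`. -/
def LamNormSq (m : ℕ) (lam : ℂ) : ℝ :=
  ∑ j ∈ Finset.range (m + 1), ‖lam‖ ^ (2 * j)

/-- `‖Π₊(Λ_m)‖₂²`. -/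
def PiPlusSq (m : ℕ) (lam : ℂ) : ℝ :=
  if m % 2 = 1 then
    ∑ j ∈ Finset.range ((m + 1) / 2), ‖lam ^ j + lam ^ (m - j)‖ ^ 2 / 2
  else
    (∑ j ∈ Finset.range (m / 2), ‖lam ^ j + lam ^ (m - j)‖ ^ 2 / 2) + ‖lam ^ (m / 2)‖ ^ 2

/-- `‖Π₋(Λ_m)‖₂²`. -/
def PiMinusSq (m : ℕ) (lam : ℂ) : ℝ :=
  if m % 2 = 1 then
    ∑ j ∈ Finset.range ((m + 1) / 2), ‖lam ^ j - lam ^ (m - j)‖ ^ 2 / 2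
  else
    ∑ j ∈ Finset.range (m / 2), ‖lam ^ j - lam ^ (m - j)‖ ^ 2 / 2

/-- Frobenius-norm structured backward error over T-anti-palindromic polynomials of degree `m`. -/
def etaF_Tapal {n : ℕ} (m : ℕ) (A : ℕ → Matrix (Fin n) (Fin n) ℂ) (lam : ℂ)
    (x : Fin n → ℂ) : ℝ :=
  sInf { e : ℝ | ∃ Δ : ℕ → Matrix (Fin n) (Fin n) ℂ,
    (∀ j ≤ m, Δ (m - j) = -(Δ j).transpose) ∧
    (evalP m A lam).mulVec x + (evalP m Δ lam).mulVec x = 0 ∧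
    e = Real.sqrt (∑ j ∈ Finset.range (m + 1), frobNorm (Δ j) ^ 2) }

open Finset Matrix ComplexConjugate

namespace AntiPalindromic

section Vectors

variable {ι κ : Type*} [Fintype ι]

def sqNorm (v : ι → ℂ) : ℝ := ∑ i, ‖v i‖ ^ 2

lemma sqNorm_nonneg (v : ι → ℂ) : 0 ≤ sqNorm v := sum_nonneg fun _ _ => sq_nonneg _

lemma sqNorm_smul (c : ℂ) (v : ι → ℂ) : sqNorm (c • v) = ‖c‖ ^ 2 * sqNorm v := by
  simp [sqNorm, mul_pow, mul_sum]

lemma sqNorm_neg (v : ι → ℂ) : sqNorm (-v) = sqNorm v := by simp [sqNorm]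

lemma sqNorm_star (v : ι → ℂ) : sqNorm (star v) = sqNorm v := by simp [sqNorm]

lemma dotProduct_star_self (v : ι → ℂ) : v ⬝ᵥ star v = sqNorm v := by
  simp [dotProduct, sqNorm, Complex.mul_conj, Complex.normSq_eq_norm_sq]

lemma star_dotProduct_self (v : ι → ℂ) : star v ⬝ᵥ v = sqNorm v := by
  rw [dotProduct_comm, dotProduct_star_self]

lemma sqNorm_add_of_star_dotProduct_eq_zero {u v : ι → ℂ} (h : star u ⬝ᵥ v = 0) :
    sqNorm (u + v) = sqNorm u + sqNorm v := by
  have hre : ∑ i, RCLike.re (inner ℂ (u i) (v i)) = 0 := by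
    simpa [dotProduct, RCLike.inner_apply, mul_comm] using congrArg Complex.re h
  simp only [sqNorm, Pi.add_apply, norm_add_sq (𝕜 := ℂ), sum_add_distrib, ← mul_sum, hre]
  ring

def perp (x : ι → ℂ) : (ι → ℂ) →ₗ[ℂ] ι → ℂ where
  toFun y := y - (x ⬝ᵥ y) • star x
  map_add' y z := by simp only [dotProduct_add, add_smul]; abel
  map_smul' c y := by simp only [dotProduct_smul, smul_eq_mul, mul_smul, RingHom.id_apply, smul_sub]

lemma perp_apply (x y : ι → ℂ) : perp x y = y - (x ⬝ᵥ y) • star x := rfl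

variable {x : ι → ℂ}

lemma dotProduct_perp (hx : sqNorm x = 1) (y : ι → ℂ) : x ⬝ᵥ perp x y = 0 := by
  simp [perp_apply, dotProduct_sub, dotProduct_star_self, hx]

lemma sqNorm_perp (hx : sqNorm x = 1) (y : ι → ℂ) :
    sqNorm (perp x y) = sqNorm y - ‖x ⬝ᵥ y‖ ^ 2 := by
  have horth : star ((x ⬝ᵥ y) • star x) ⬝ᵥ perp x y = 0 := by
    rw [star_smul, star_star, smul_dotProduct, dotProduct_perp hx, smul_zero]
  have h := sqNorm_add_of_star_dotProduct_eq_zero horth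
  rw [perp_apply, add_sub_cancel, sqNorm_smul, sqNorm_star, hx, ← perp_apply] at h
  linarith

lemma norm_sum_mul_sq_le (s : Finset κ) (a b : κ → ℂ) :
    ‖∑ j ∈ s, a j * b j‖ ^ 2 ≤ (∑ j ∈ s, ‖a j‖ ^ 2) * ∑ j ∈ s, ‖b j‖ ^ 2 := by
  calc ‖∑ j ∈ s, a j * b j‖ ^ 2 ≤ (∑ j ∈ s, ‖a j‖ * ‖b j‖) ^ 2 := by
        gcongr
        exact (norm_sum_le _ _).trans_eq (by simp only [norm_mul])
    _ ≤ _ := sum_mul_sq_le_sq_mul_sq s _ _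

lemma sqNorm_sum_smul_le (s : Finset κ) (a : κ → ℂ) (v : κ → ι → ℂ) :
    sqNorm (∑ j ∈ s, a j • v j) ≤ (∑ j ∈ s, ‖a j‖ ^ 2) * ∑ j ∈ s, sqNorm (v j) := by
  simp only [sqNorm, Finset.sum_apply, Pi.smul_apply, smul_eq_mul]
  rw [sum_comm (s := s), mul_sum]
  exact sum_le_sum fun i _ => norm_sum_mul_sq_le s a (v · i)

variable [Fintype κ]

def frobSq (M : Matrix κ ι ℂ) : ℝ := ∑ i, sqNorm (M i)

lemma frobSq_transpose (M : Matrix κ ι ℂ) : frobSq Mᵀ = frobSq M := by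
  simp only [frobSq, sqNorm, transpose_apply]
  exact sum_comm

lemma frobSq_vecMulVec (a : κ → ℂ) (b : ι → ℂ) :
    frobSq (vecMulVec a b) = sqNorm a * sqNorm b := by
  simp only [frobSq, sqNorm, vecMulVec_apply, norm_mul, mul_pow, ← mul_sum, ← sum_mul]

lemma sqNorm_mulVec_le (M : Matrix κ ι ℂ) (v : ι → ℂ) :
    sqNorm (M *ᵥ v) ≤ frobSq M * sqNorm v := by
  rw [frobSq, sum_mul]
  exact sum_le_sum fun i _ => norm_sum_mul_sq_le univ (M i) v

lemma dotProduct_transpose_mulVec (M : Matrix ι ι ℂ) (x : ι → ℂ) :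
    x ⬝ᵥ Mᵀ *ᵥ x = x ⬝ᵥ M *ᵥ x := by
  rw [dotProduct_mulVec, vecMul_transpose, dotProduct_comm]

lemma frobSq_eq_sqNorm_mulVec_add (hx : sqNorm x = 1) (M : Matrix κ ι ℂ) :
    frobSq M = sqNorm (M *ᵥ x) + frobSq (M - vecMulVec (M *ᵥ x) (star x)) := by
  have hrow : ∀ i, sqNorm (M i)
      = ‖(M *ᵥ x) i‖ ^ 2 + sqNorm ((M - vecMulVec (M *ᵥ x) (star x)) i) := by
    intro i
    have h1 : (M *ᵥ x) i = x ⬝ᵥ M i := dotProduct_comm _ _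
    have h2 : (M - vecMulVec (M *ᵥ x) (star x)) i = perp x (M i) := by
      ext j; simp [perp_apply, vecMulVec_apply, h1]
    rw [h2, sqNorm_perp hx, h1]
    ring
  rw [frobSq, frobSq, sum_congr rfl fun i _ => hrow i, sum_add_distrib]
  rfl

lemma sqNorm_mulVec_add_sqNorm_perp_le (hx : sqNorm x = 1) (M : Matrix ι ι ℂ) :
    sqNorm (M *ᵥ x) + sqNorm (perp x (Mᵀ *ᵥ x)) ≤ frobSq M := by
  set B := M - vecMulVec (M *ᵥ x) (star x)
  have hB : Bᵀ *ᵥ x = perp x (Mᵀ *ᵥ x) := by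
    rw [transpose_sub, transpose_vecMulVec, sub_mulVec, vecMulVec_mulVec, op_smul_eq_smul,
      perp_apply, dotProduct_transpose_mulVec, dotProduct_comm]
  calc sqNorm (M *ᵥ x) + sqNorm (perp x (Mᵀ *ᵥ x))
      ≤ sqNorm (M *ᵥ x) + frobSq Bᵀ * sqNorm x := by
        rw [← hB]; gcongr; exact sqNorm_mulVec_le _ _
    _ = frobSq M := by rw [hx, mul_one, frobSq_transpose, ← frobSq_eq_sqNorm_mulVec_add hx]

end Vectors

lemma sum_range_reflect_self {M : Type*} [AddCommMonoid M] (m : ℕ) (f : ℕ → M) :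
    ∑ j ∈ range (m + 1), f (m - j) = ∑ j ∈ range (m + 1), f j := by
  simpa using sum_range_reflect f (m + 1)

section Extension

variable {ι : Type*} [Fintype ι] {m : ℕ} {x : ι → ℂ} {y : ℕ → ι → ℂ}

def antiPalExt (m : ℕ) (x : ι → ℂ) (y : ℕ → ι → ℂ) (j : ℕ) : Matrix ι ι ℂ :=
  vecMulVec (perp x (y j)) (star x) - vecMulVec (star x) (y (m - j))

lemma antiPalExt_reflect (hy : ∀ j ≤ m, x ⬝ᵥ y (m - j) = -(x ⬝ᵥ y j)) {j : ℕ} (hj : j ≤ m) :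
    antiPalExt m x y (m - j) = -(antiPalExt m x y j)ᵀ := by
  ext a b
  simp only [antiPalExt, Nat.sub_sub_self hj, perp_apply, hy j hj, Matrix.neg_apply,
    Matrix.transpose_apply, Matrix.sub_apply, vecMulVec_apply, Pi.sub_apply, Pi.smul_apply,
    smul_eq_mul]
  ring

lemma antiPalExt_mulVec (hy : ∀ j ≤ m, x ⬝ᵥ y (m - j) = -(x ⬝ᵥ y j)) (hx : sqNorm x = 1) {j : ℕ}
    (hj : j ≤ m) :
    antiPalExt m x y j *ᵥ x = y j := by
  simp only [antiPalExt, sub_mulVec, vecMulVec_mulVec, op_smul_eq_smul, star_dotProduct_self, hx,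
    Complex.ofReal_one, one_smul, dotProduct_comm (y (m - j)), hy j hj, perp_apply, neg_smul,
    sub_neg_eq_add, sub_add_cancel]

lemma frobSq_antiPalExt (hy : ∀ j ≤ m, x ⬝ᵥ y (m - j) = -(x ⬝ᵥ y j)) (hx : sqNorm x = 1) {j : ℕ}
    (hj : j ≤ m) :
    frobSq (antiPalExt m x y j) = sqNorm (y j) + sqNorm (perp x (y (m - j))) := by
  have hrest : antiPalExt m x y j - vecMulVec (y j) (star x)
      = vecMulVec (-star x) (perp x (y (m - j))) := by
    ext a b
    simp only [antiPalExt, perp_apply, hy j hj, Matrix.sub_apply, vecMulVec_apply, Pi.sub_apply,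
      Pi.neg_apply, Pi.smul_apply, smul_eq_mul]
    ring
  rw [frobSq_eq_sqNorm_mulVec_add hx, antiPalExt_mulVec hy hx hj, hrest, frobSq_vecMulVec,
    sqNorm_neg, sqNorm_star, hx, one_mul]

lemma sum_frobSq_antiPalExt (hy : ∀ j ≤ m, x ⬝ᵥ y (m - j) = -(x ⬝ᵥ y j)) (hx : sqNorm x = 1) :
    ∑ j ∈ range (m + 1), frobSq (antiPalExt m x y j)
      = ∑ j ∈ range (m + 1), (sqNorm (y j) + sqNorm (perp x (y j))) := by
  rw [sum_congr rfl fun j hj => frobSq_antiPalExt hy hx (mem_range_succ_iff.mp hj),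
    sum_add_distrib, sum_add_distrib, sum_range_reflect_self m (fun j => sqNorm (perp x (y j)))]

end Extension

section LowerBound

variable {ι : Type*} [Fintype ι] {m : ℕ} {x : ι → ℂ} {Δ : ℕ → Matrix ι ι ℂ}

lemma dotProduct_mulVec_reflect (hΔ : ∀ j ≤ m, Δ (m - j) = -(Δ j)ᵀ) {j : ℕ} (hj : j ≤ m) :
    x ⬝ᵥ Δ (m - j) *ᵥ x = -(x ⬝ᵥ Δ j *ᵥ x) := by
  rw [hΔ j hj, neg_mulVec, dotProduct_neg, dotProduct_transpose_mulVec]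

lemma sum_sqNorm_add_sqNorm_perp_le (hx : sqNorm x = 1) (hΔ : ∀ j ≤ m, Δ (m - j) = -(Δ j)ᵀ) :
    ∑ j ∈ range (m + 1), (sqNorm (Δ j *ᵥ x) + sqNorm (perp x (Δ j *ᵥ x)))
      ≤ ∑ j ∈ range (m + 1), frobSq (Δ j) := by
  rw [sum_add_distrib, ← sum_range_reflect_self m (fun j => sqNorm (perp x (Δ j *ᵥ x))),
    ← sum_add_distrib]
  refine sum_le_sum fun j hj => ?_
  rw [hΔ j (mem_range_succ_iff.mp hj), neg_mulVec, map_neg, sqNorm_neg]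
  exact sqNorm_mulVec_add_sqNorm_perp_le hx (Δ j)

end LowerBound

section Scalars

variable (m : ℕ) (lam : ℂ)

lemma sum_norm_pow_sq : ∑ j ∈ range (m + 1), ‖lam ^ j‖ ^ 2 = LamNormSq m lam := by
  simp only [LamNormSq, norm_pow, ← pow_mul, mul_comm]

lemma sum_pow_mul_conj_pow :
    ∑ j ∈ range (m + 1), lam ^ j * conj (lam ^ j) = LamNormSq m lam := by
  simp only [Complex.mul_conj, Complex.normSq_eq_norm_sq, ← sum_norm_pow_sq, Complex.ofReal_sum,
    Complex.ofReal_pow]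

lemma one_le_LamNormSq : 1 ≤ LamNormSq m lam := by
  calc (1 : ℝ) = ‖lam‖ ^ (2 * 0) := by simp
    _ ≤ LamNormSq m lam := single_le_sum (f := fun j => ‖lam‖ ^ (2 * j))
      (fun _ _ => by positivity) (mem_range.mpr m.succ_pos)

lemma sum_range_add_self_succ_of_reflect {M : Type*} [AddCommMonoid M] (k : ℕ) {g : ℕ → M}
    (hg : ∀ j ≤ k + k, g (k + k - j) = g j) :
    ∑ j ∈ range (k + k + 1), g j = 2 • ∑ j ∈ range k, g j + g k := by
  have hupper : ∑ i ∈ range k, g (k + (i + 1)) = ∑ i ∈ range k, g i := by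
    rw [← sum_range_reflect g k]
    refine sum_congr rfl fun i hi => ?_
    have hi := mem_range.mp hi
    rw [← hg _ (by omega)]
    congr 1
    omega
  rw [add_assoc, sum_range_add, sum_range_succ', hupper, add_zero, two_nsmul, add_assoc]

variable {m} in
lemma pow_sub_pow_reflect {j : ℕ} (hj : j ≤ m) :
    lam ^ (m - j) - lam ^ (m - (m - j)) = -(lam ^ j - lam ^ (m - j)) := by
  rw [Nat.sub_sub_self hj, neg_sub]

/-- `Π₋(Λ_m)` has one entry for each pair `{j, m - j}`, and the unpaired middle entry vanishes. -/
lemma sum_norm_pow_sub_pow_sq (hm : Even m) :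
    ∑ j ∈ range (m + 1), ‖lam ^ j - lam ^ (m - j)‖ ^ 2 = 4 * PiMinusSq m lam := by
  obtain ⟨k, rfl⟩ := hm
  rw [sum_range_add_self_succ_of_reflect k fun j hj => by rw [pow_sub_pow_reflect lam hj, norm_neg],
    PiMinusSq, if_neg (by omega), show (k + k) / 2 = k by omega, Nat.add_sub_cancel, sub_self,
    norm_zero, ← sum_div, nsmul_eq_mul]
  ring

lemma PiMinusSq_nonneg (hm : Even m) : 0 ≤ PiMinusSq m lam := by
  have h := sum_norm_pow_sub_pow_sq m lam hm
  have : 0 ≤ ∑ j ∈ range (m + 1), ‖lam ^ j - lam ^ (m - j)‖ ^ 2 := by positivity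
  linarith

lemma PiMinusSq_pos (hm : Even m) (hm0 : 0 < m) (hlam1 : lam ≠ 1) (hlam2 : lam ≠ -1) :
    0 < PiMinusSq m lam := by
  obtain ⟨k, rfl⟩ := hm
  rw [PiMinusSq, if_neg (by omega), show (k + k) / 2 = k by omega]
  by_contra! hle
  have hzero : ∀ j < k, lam ^ j = lam ^ (k + k - j) := fun j hj => by
    have := (sum_eq_zero_iff_of_nonneg fun i _ => by positivity).mp
      (le_antisymm hle (sum_nonneg fun i _ => by positivity)) j (mem_range.mpr hj)
    simpa [sub_eq_zero] using this
  have hlam0 : lam ≠ 0 := by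
    rintro rfl
    simpa [zero_pow (by omega : k + k ≠ 0)] using hzero 0 (by omega)
  have hsq : lam ^ 2 = 1 := by
    have h := hzero (k - 1) (by omega)
    rw [show k + k - (k - 1) = k - 1 + 2 by omega, pow_add, eq_comm,
      mul_eq_left₀ (pow_ne_zero _ hlam0)] at h
    exact h
  rcases sq_eq_one_iff.mp hsq with h | h
  exacts [hlam1 h, hlam2 h]

variable {m} in
lemma two_mul_sum_pow_mul_of_reflect {s : ℕ → ℂ} (hs : ∀ j ≤ m, s (m - j) = -s j) :
    2 * ∑ j ∈ range (m + 1), lam ^ j * s j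
      = ∑ j ∈ range (m + 1), (lam ^ j - lam ^ (m - j)) * s j := by
  have hrefl : ∑ j ∈ range (m + 1), lam ^ j * s j
      = -∑ j ∈ range (m + 1), lam ^ (m - j) * s j := by
    rw [← sum_range_reflect_self m (fun j => lam ^ j * s j), ← sum_neg_distrib]
    refine sum_congr rfl fun j hj => ?_
    rw [hs j (mem_range_succ_iff.mp hj)]
    ring
  rw [two_mul]
  nth_rewrite 2 [hrefl]
  simp only [sub_mul, sum_sub_distrib]
  ring

lemma sum_pow_mul_conj_sub_pow (hm : Even m) :
    ∑ j ∈ range (m + 1), lam ^ j * conj (lam ^ j - lam ^ (m - j)) = 2 * PiMinusSq m lam := by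
  have h := two_mul_sum_pow_mul_of_reflect lam (s := fun j => conj (lam ^ j - lam ^ (m - j)))
    fun j hj => by rw [pow_sub_pow_reflect lam hj, map_neg]
  simp only [Complex.mul_conj, Complex.normSq_eq_norm_sq] at h
  have h4 := congrArg (fun t : ℝ => (t : ℂ)) (sum_norm_pow_sub_pow_sq m lam hm)
  push_cast at h h4 ⊢
  linear_combination h / 2 + h4 / 2

variable {m} in
lemma norm_sq_div_PiMinusSq_le (hm : Even m) {s : ℕ → ℂ} (hs : ∀ j ≤ m, s (m - j) = -s j) :
    ‖∑ j ∈ range (m + 1), lam ^ j * s j‖ ^ 2 / PiMinusSq m lam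
      ≤ ∑ j ∈ range (m + 1), ‖s j‖ ^ 2 := by
  have hcs := norm_sum_mul_sq_le (range (m + 1)) (fun j => lam ^ j - lam ^ (m - j)) s
  rw [← two_mul_sum_pow_mul_of_reflect lam hs, norm_mul, mul_pow, Complex.norm_two,
    sum_norm_pow_sub_pow_sq m lam hm] at hcs
  exact div_le_of_le_mul₀ (PiMinusSq_nonneg m lam hm) (sum_nonneg fun _ _ => by positivity)
    (by linarith)

end Scalars

section Optimization

variable {ι : Type*} [Fintype ι] {m : ℕ} (lam : ℂ) {x : ι → ℂ}

lemma le_sum_sqNorm_add_sqNorm_perp (hm : Even m) (hx : sqNorm x = 1) {y : ℕ → ι → ℂ}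
    (hy : ∀ j ≤ m, x ⬝ᵥ y (m - j) = -(x ⬝ᵥ y j)) {r : ι → ℂ}
    (hr : ∑ j ∈ range (m + 1), lam ^ j • y j = r) :
    ‖x ⬝ᵥ r‖ ^ 2 / PiMinusSq m lam + 2 * (sqNorm r - ‖x ⬝ᵥ r‖ ^ 2) / LamNormSq m lam
      ≤ ∑ j ∈ range (m + 1), (sqNorm (y j) + sqNorm (perp x (y j))) := by
  have hdot : x ⬝ᵥ r = ∑ j ∈ range (m + 1), lam ^ j * (x ⬝ᵥ y j) := by
    simp only [← hr, dotProduct_sum, dotProduct_smul, smul_eq_mul]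
  have hpar := norm_sq_div_PiMinusSq_le lam hm (s := fun j => x ⬝ᵥ y j) hy
  have hperp : sqNorm r - ‖x ⬝ᵥ r‖ ^ 2
      ≤ LamNormSq m lam * ∑ j ∈ range (m + 1), sqNorm (perp x (y j)) := by
    rw [← sqNorm_perp hx, ← hr, map_sum, ← sum_norm_pow_sq]
    simp only [map_smul]
    exact sqNorm_sum_smul_le _ _ _
  have hL := one_le_LamNormSq m lam
  have hperp_div : 2 * (sqNorm r - ‖x ⬝ᵥ r‖ ^ 2) / LamNormSq m lam
      ≤ 2 * ∑ j ∈ range (m + 1), sqNorm (perp x (y j)) := by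
    rw [div_le_iff₀ (by linarith)]
    linarith
  have hsplit : ∀ j, sqNorm (y j) = ‖x ⬝ᵥ y j‖ ^ 2 + sqNorm (perp x (y j)) := fun j => by
    rw [sqNorm_perp hx]; ring
  rw [← hdot] at hpar
  simp only [hsplit, sum_add_distrib]
  linarith

lemma exists_sum_sqNorm_add_sqNorm_perp_eq (hm : Even m) (hPm : 0 < PiMinusSq m lam)
    (hx : sqNorm x = 1) (r : ι → ℂ) :
    ∃ y : ℕ → ι → ℂ, (∀ j ≤ m, x ⬝ᵥ y (m - j) = -(x ⬝ᵥ y j)) ∧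
      ∑ j ∈ range (m + 1), lam ^ j • y j = r ∧
      ∑ j ∈ range (m + 1), (sqNorm (y j) + sqNorm (perp x (y j)))
        = ‖x ⬝ᵥ r‖ ^ 2 / PiMinusSq m lam + 2 * (sqNorm r - ‖x ⬝ᵥ r‖ ^ 2) / LamNormSq m lam := by
  set d := x ⬝ᵥ r
  set P := PiMinusSq m lam
  set L := LamNormSq m lam
  have hL : 0 < L := one_pos.trans_le (one_le_LamNormSq m lam)
  set τ : ℂ := d / (2 * P)
  set ρ : ι → ℂ := (L : ℂ)⁻¹ • perp x r
  set s : ℕ → ℂ := fun j => conj (lam ^ j - lam ^ (m - j)) * τ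
  -- equality in both Cauchy–Schwarz steps: `s ∝ conj (λ^j - λ^(m-j))`, `perp x (y j) ∝ conj λ^j`
  set y : ℕ → ι → ℂ := fun j => s j • star x + conj (lam ^ j) • ρ
  have hρ : x ⬝ᵥ ρ = 0 := by rw [dotProduct_smul, dotProduct_perp hx, smul_zero]
  have hdot : ∀ j, x ⬝ᵥ y j = s j := fun j => by
    simp [y, dotProduct_add, dotProduct_smul, dotProduct_star_self, hx, hρ]
  have hperp : ∀ j, perp x (y j) = conj (lam ^ j) • ρ := fun j => by
    simp [y, perp_apply, dotProduct_add, dotProduct_smul, dotProduct_star_self, hx, hρ]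
  refine ⟨y, fun j hj => ?_, ?_, ?_⟩
  · rw [hdot, hdot]
    simp only [s, pow_sub_pow_reflect lam hj, map_neg, neg_mul]
  · have hs : ∑ j ∈ range (m + 1), lam ^ j * s j = d := by
      simp only [s, ← mul_assoc, ← sum_mul, sum_pow_mul_conj_sub_pow m lam hm]
      exact mul_div_cancel₀ _ (by exact_mod_cast (by positivity : 2 * P ≠ 0))
    simp only [y, smul_add, smul_smul, sum_add_distrib, ← sum_smul, hs, sum_pow_mul_conj_pow]
    rw [smul_smul, mul_inv_cancel₀ (by exact_mod_cast hL.ne'), one_smul, perp_apply]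
    abel
  · have hnorm : ∀ j, sqNorm (y j) + sqNorm (perp x (y j))
        = ‖s j‖ ^ 2 + 2 * (‖lam ^ j‖ ^ 2 * sqNorm ρ) := fun j => by
      have h := sqNorm_perp hx (y j)
      rw [hperp, hdot, sqNorm_smul, Complex.norm_conj] at h
      rw [hperp, sqNorm_smul, Complex.norm_conj]
      linarith
    have hsum_s : ∑ j ∈ range (m + 1), ‖s j‖ ^ 2 = ‖d‖ ^ 2 / P := by
      simp only [s, norm_mul, mul_pow, Complex.norm_conj, ← sum_mul,
        sum_norm_pow_sub_pow_sq m lam hm, τ, norm_div, norm_mul, Complex.norm_two,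
        Complex.norm_real, Real.norm_of_nonneg hPm.le]
      field_simp
      ring
    have hρ_sq : sqNorm ρ = (sqNorm r - ‖d‖ ^ 2) / L ^ 2 := by
      rw [sqNorm_smul, sqNorm_perp hx, norm_inv, Complex.norm_real, Real.norm_of_nonneg hL.le]
      field_simp
      rfl
    rw [sum_congr rfl fun j _ => hnorm j, sum_add_distrib, ← mul_sum, ← sum_mul, sum_norm_pow_sq,
      hsum_s, hρ_sq]
    field_simp
    ring

end Optimization

lemma vnorm_sq {ι : Type*} [Fintype ι] (v : ι → ℂ) : vnorm v ^ 2 = sqNorm v :=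
  Real.sq_sqrt (sqNorm_nonneg v)

lemma frobNorm_sq {ι : Type*} [Fintype ι] (M : Matrix ι ι ℂ) : frobNorm M ^ 2 = frobSq M :=
  Real.sq_sqrt (sum_nonneg fun _ _ => sqNorm_nonneg _)

lemma evalP_mulVec {n : ℕ} (m : ℕ) (Δ : ℕ → Matrix (Fin n) (Fin n) ℂ) (z : ℂ) (x : Fin n → ℂ) :
    evalP m Δ z *ᵥ x = ∑ j ∈ range (m + 1), z ^ j • (Δ j *ᵥ x) := by
  simp only [evalP, sum_mulVec, smul_mulVec]

end AntiPalindromic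

open AntiPalindromic

theorem stmt_7_general {m n : ℕ} (hm : Even m) (hm0 : 0 < m)
    (A : ℕ → Matrix (Fin n) (Fin n) ℂ)
    (lam : ℂ) (hlam1 : lam ≠ 1) (hlam2 : lam ≠ -1)
    (x : Fin n → ℂ) (hx : vnorm x = 1)
    (r : Fin n → ℂ) (hr : r = -(evalP m A lam).mulVec x) :
    etaF_Tapal m A lam x =
      Real.sqrt ((2 / LamNormSq m lam) * vnorm r ^ 2 +
        (1 / PiMinusSq m lam - 2 / LamNormSq m lam) * ‖dotProduct x r‖ ^ 2) := by
  have hx1 : sqNorm x = 1 := by rw [← vnorm_sq, hx, one_pow]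
  have hP := PiMinusSq_pos m lam hm hm0 hlam1 hlam2
  have hfeas : ∀ Δ : ℕ → Matrix (Fin n) (Fin n) ℂ, evalP m A lam *ᵥ x + evalP m Δ lam *ᵥ x = 0 ↔
      ∑ j ∈ range (m + 1), lam ^ j • (Δ j *ᵥ x) = r := fun Δ => by
    rw [hr, ← evalP_mulVec, eq_neg_iff_add_eq_zero, add_comm]
  rw [etaF_Tapal, vnorm_sq, show ∀ a b P L : ℝ, 2 / L * a + (1 / P - 2 / L) * b
    = b / P + 2 * (a - b) / L by intros; ring]
  refine IsLeast.csInf_eq ⟨?_, ?_⟩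
  · obtain ⟨y, hy, hyr, hcost⟩ := exists_sum_sqNorm_add_sqNorm_perp_eq lam hm hP hx1 r
    refine ⟨antiPalExt m x y, fun j hj => antiPalExt_reflect hy hj, (hfeas _).2 ?_, ?_⟩
    · rw [← hyr]
      exact sum_congr rfl fun j hj => by rw [antiPalExt_mulVec hy hx1 (mem_range_succ_iff.mp hj)]
    · simp only [frobNorm_sq, sum_frobSq_antiPalExt hy hx1, hcost]
  · rintro e ⟨Δ, hΔ, hΔx, rfl⟩
    refine Real.sqrt_le_sqrt ?_
    calc _ ≤ ∑ j ∈ range (m + 1), (sqNorm (Δ j *ᵥ x) + sqNorm (perp x (Δ j *ᵥ x))) :=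
          le_sum_sqNorm_add_sqNorm_perp lam hm hx1
            (fun j hj => dotProduct_mulVec_reflect hΔ hj) ((hfeas Δ).1 hΔx)
      _ ≤ _ := sum_sqNorm_add_sqNorm_perp_le hx1 hΔ
      _ = _ := by simp only [frobNorm_sq]

/-- Frobenius structured backward error, T-anti-palindromic, m even, λ ≠ ±1. -/
theorem stmt_7 {m n : ℕ} (hm : Even m) (hm0 : 0 < m) (hn : 0 < n)
    (A : ℕ → Matrix (Fin n) (Fin n) ℂ)
    (hpal : ∀ j ≤ m, A (m - j) = -(A j).transpose)
    (hreg : ∃ z : ℂ, (evalP m A z).det ≠ 0)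
    (lam : ℂ) (hlam1 : lam ≠ 1) (hlam2 : lam ≠ -1)
    (x : Fin n → ℂ) (hx : vnorm x = 1)
    (r : Fin n → ℂ) (hr : r = -(evalP m A lam).mulVec x) :
    etaF_Tapal m A lam x =
      Real.sqrt ((2 / LamNormSq m lam) * vnorm r ^ 2 +
        (1 / PiMinusSq m lam - 2 / LamNormSq m lam) * ‖dotProduct x r‖ ^ 2) :=
  stmt_7_general hm hm0 A lam hlam1 hlam2 x hx r hr
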